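/- arXiv:2311.08988 — 3 statements merged into one kernel-verified Lean document; each statement's English description precedes it below -/
import Mathlib

section
/- Let p be a prime and m a positive integer, and let Syl_{p^m} act on the edge-subgraphs of the complete graph K_{p^m} on vertex set (Z_p)^m. Then the fixed points of this action are exactly the m-fold lexicographic products of difference graphs over Z_p: fp(Syl_{p^m}, K_{p^m}) = { C^{A_1} ∘ ⋯ ∘ C^{A_m} : A_1, …, A_m ⊆ Z_p^+ }. -/
/-!
An element of `Syl_{p^m}` changes coordinate `i` by an amount that depends only on the earlier
coordinates. Hence it preserves, for a pair of tuples `a ≠ b`, the first index `i` at which they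
differ together with the difference `a i - b i`; and conversely any two pairs sharing this index
and this difference are exchanged by some element of the group. In a fixed graph, adjacency of
`a` and `b` therefore depends only on `i` and `a i - b i`, and, swapping the two tuples, only on
`±(a i - b i)`. So the graph is `C^{B_1} ∘ ⋯ ∘ C^{B_m}`, where `B_i` is the set of `d ∈ Z_p^+`
such that `d • e_i` is adjacent to `0`.
-/

/-- `P` is a valid choice of `Z_p^+`: a set of nonzero elements containing exactly one
of `x` and `−x` for every nonzero `x`. -/
def IsPlusSet {R : Type*} [Ring R] (P : Set R) : Prop :=
  0 ∉ P ∧ ∀ x : R, x ≠ 0 → ((x ∈ P ∨ -x ∈ P) ∧ (x ∈ P → -x ∈ P → x = -x))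

/-- The `m`-fold lexicographic product of difference graphs
`C^{A 1} ∘ ⋯ ∘ C^{A m}` on vertex set `(Z_p)^m`: two tuples are adjacent iff at the
first index `i` (some index `i` preceded by agreement) their difference lies in
`A i ∪ (−A i)`. -/
def lexDiff {p m : ℕ} (A : Fin m → Set (ZMod p)) : SimpleGraph (Fin m → ZMod p) where
  Adj a b := a ≠ b ∧
    ∃ i : Fin m, (∀ j : Fin m, j < i → a j = b j) ∧ a i - b i ∈ A i ∪ -(A i)
  symm := by
    constructor
    rintro a b ⟨hne, i, hpre, hmem⟩
    refine ⟨hne.symm, i, fun j hj => (hpre j hj).symm, ?_⟩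
    have h : b i - a i = -(a i - b i) := by ring
    rw [h]
    rcases hmem with h' | h'
    · exact Or.inr (by simpa using h')
    · exact Or.inl (by simpa using h')
  loopless := ⟨fun a h => h.1 rfl⟩

/-- `σ` is an element of the Sylow group `Syl_{p^m}`: a map of the form
`(x_1,…,x_m) ↦ (x_1 + φ_0, x_2 + φ_1(x_1), …, x_m + φ_{m−1}(x_1,…,x_{m−1}))`,
where each `φ i` depends only on the coordinates `j < i`. -/
def IsSylElem {p m : ℕ} (σ : (Fin m → ZMod p) → (Fin m → ZMod p)) : Prop :=
  ∃ φ : Fin m → (Fin m → ZMod p) → ZMod p,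
    (∀ (i : Fin m) (x y : Fin m → ZMod p),
      (∀ j : Fin m, j < i → x j = y j) → φ i x = φ i y) ∧
    ∀ (x : Fin m → ZMod p) (i : Fin m), σ x i = x i + φ i x

theorem Function.exists_eq_below_and_ne {ι α : Type*} [LT ι] [WellFoundedLT ι] {a b : ι → α}
    (h : a ≠ b) : ∃ i, (∀ j < i, a j = b j) ∧ a i ≠ b i := by
  obtain ⟨i, hi, hmin⟩ := wellFounded_lt.has_min {i | a i ≠ b i} (Function.ne_iff.mp h)
  exact ⟨i, fun j hj => by_contra fun hne => hmin j hne hj, hi⟩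

theorem SimpleGraph.image_edgeSet_eq_iff {V : Type*} (G : SimpleGraph V) {σ : V → V}
    (hσ : σ.Bijective) :
    Sym2.map σ '' G.edgeSet = G.edgeSet ↔ ∀ x y, G.Adj (σ x) (σ y) ↔ G.Adj x y := by
  have hinj := Sym2.map.injective hσ.1
  constructor
  · intro h x y
    rw [← mem_edgeSet, ← h, ← Sym2.map_mk, hinj.mem_set_image, mem_edgeSet]
  · intro h
    ext e
    induction e using Sym2.ind with
    | _ u v =>
      obtain ⟨x, rfl⟩ := hσ.2 u
      obtain ⟨y, rfl⟩ := hσ.2 v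
      rw [← Sym2.map_mk, hinj.mem_set_image, Sym2.map_mk, mem_edgeSet, mem_edgeSet, h]

section Syl

variable {p m : ℕ}

namespace IsSylElem

variable {σ : (Fin m → ZMod p) → (Fin m → ZMod p)} {x y : Fin m → ZMod p} {i : Fin m}

theorem sub_apply_eq (hσ : IsSylElem σ) (h : ∀ j < i, x j = y j) :
    σ x i - σ y i = x i - y i := by
  obtain ⟨φ, hφ, hval⟩ := hσ
  rw [hval, hval, hφ i x y h]
  ring

theorem eq_below_iff (hσ : IsSylElem σ) :
    (∀ j < i, σ x j = σ y j) ↔ ∀ j < i, x j = y j := by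
  constructor
  · intro h j hj
    induction j using WellFoundedLT.induction with
    | _ j ih =>
      have := hσ.sub_apply_eq fun k hk => ih k hk (hk.trans hj)
      rwa [h j hj, sub_self, eq_comm, sub_eq_zero] at this
  · intro h j hj
    have := hσ.sub_apply_eq fun k hk => h k (hk.trans hj)
    rwa [h j hj, sub_self, sub_eq_zero] at this

theorem injective (hσ : IsSylElem σ) : σ.Injective := by
  intro x y hxy
  funext j
  have := hσ.sub_apply_eq ((hσ.eq_below_iff (i := j)).mp fun k _ => congrFun hxy k)
  rwa [hxy, sub_self, eq_comm, sub_eq_zero] at this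

-- Solve `σ x = y` one coordinate at a time: correcting `x` at coordinate `n` leaves `σ x`
-- unchanged below `n`.
theorem surjective (hσ : IsSylElem σ) : σ.Surjective := by
  intro y
  have hprefix : ∀ n : ℕ, ∃ x, ∀ j : Fin m, (j : ℕ) < n → σ x j = y j := by
    intro n
    induction n with
    | zero => exact ⟨y, fun j hj => absurd hj j.val.not_lt_zero⟩
    | succ n ih =>
      obtain ⟨x, hx⟩ := ih
      by_cases hn : n < m
      · let k : Fin m := ⟨n, hn⟩
        let x' := Function.update x k (x k + (y k - σ x k))
        have hx' : ∀ j ≤ k, σ x' j - σ x j = x' j - x j := fun j hj =>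
          hσ.sub_apply_eq fun l hl => Function.update_of_ne (hl.trans_le hj).ne _ _
        refine ⟨x', fun j hj => ?_⟩
        rcases (Nat.lt_succ_iff.mp hj).lt_or_eq with hj | hj
        · have hjk : j < k := hj
          have := hx' j hjk.le
          rwa [show x' j = x j from Function.update_of_ne hjk.ne _ _, sub_self, sub_eq_zero,
            hx j hj] at this
        · obtain rfl : j = k := Fin.ext hj
          have := hx' k le_rfl
          rw [show x' k = _ from Function.update_self _ _ _] at this
          linear_combination this
      · exact ⟨x, fun j hj => hx j (lt_of_lt_of_le j.isLt (not_lt.mp hn))⟩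
  obtain ⟨x, hx⟩ := hprefix m
  exact ⟨x, funext fun j => hx j j.isLt⟩

theorem bijective (hσ : IsSylElem σ) : σ.Bijective := ⟨hσ.injective, hσ.surjective⟩

end IsSylElem

-- The shift by `c - a` on the cone of tuples agreeing with `a` below `j`, and by `d - b`
-- elsewhere.
theorem exists_isSylElem_map_pair {a b c d : Fin m → ZMod p} {i : Fin m}
    (hab : ∀ j < i, a j = b j) (hcd : ∀ j < i, c j = d j) (hne : a i ≠ b i)
    (hdiff : c i - d i = a i - b i) :
    ∃ σ, IsSylElem σ ∧ σ a = c ∧ σ b = d := by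
  classical
  let φ : Fin m → (Fin m → ZMod p) → ZMod p := fun j x =>
    if ∀ k < j, x k = a k then c j - a j else d j - b j
  refine ⟨fun x j => x j + φ j x, ⟨φ, fun j x y hxy => ?_, fun _ _ => rfl⟩, ?_, ?_⟩
  · have : (∀ k < j, x k = a k) ↔ (∀ k < j, y k = a k) :=
      forall₂_congr fun k hk => by rw [hxy k hk]
    simp only [φ, this]
  · funext j
    simp [φ]
  · funext j
    rcases lt_or_ge i j with hij | hji
    · have : ¬ ∀ k < j, b k = a k := fun h => hne (h i hij).symm
      simp [φ, this]
    · have hba : ∀ k < j, b k = a k := fun k hk => (hab k (hk.trans_le hji)).symm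
      simp only [φ, if_pos hba]
      rcases hji.lt_or_eq with hji | rfl
      · rw [← hab j hji, ← hcd j hji]
        ring
      · linear_combination hdiff

def IsSylFixed (A : SimpleGraph (Fin m → ZMod p)) : Prop :=
  ∀ σ, IsSylElem σ → Sym2.map σ '' A.edgeSet = A.edgeSet

namespace IsSylFixed

variable {A : SimpleGraph (Fin m → ZMod p)}

theorem adj_apply_iff (hA : IsSylFixed A) {σ : (Fin m → ZMod p) → (Fin m → ZMod p)}
    (hσ : IsSylElem σ) (x y : Fin m → ZMod p) : A.Adj (σ x) (σ y) ↔ A.Adj x y :=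
  (A.image_edgeSet_eq_iff hσ.bijective).mp (hA σ hσ) x y

theorem adj_iff_adj_single (hA : IsSylFixed A) {a b : Fin m → ZMod p} {i : Fin m}
    (hab : ∀ j < i, a j = b j) (hne : a i ≠ b i) :
    A.Adj a b ↔ A.Adj (Pi.single i (a i - b i)) 0 := by
  obtain ⟨σ, hσ, ha, hb⟩ := exists_isSylElem_map_pair (c := Pi.single i (a i - b i)) (d := 0) hab
    (fun j hj => Pi.single_eq_of_ne hj.ne _) hne (by simp)
  rw [← hA.adj_apply_iff hσ, ha, hb]

theorem adj_single_neg_iff (hA : IsSylFixed A) {i : Fin m} {d : ZMod p} (hd : d ≠ 0) :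
    A.Adj (Pi.single i (-d)) 0 ↔ A.Adj (Pi.single i d) 0 := by
  have h := hA.adj_iff_adj_single (a := 0) (b := Pi.single i (-d)) (i := i)
    (fun j hj => by simp [hj.ne]) (by simpa using hd)
  simpa [A.adj_comm] using h

end IsSylFixed

theorem lexDiff_adj_iff_of_eq_below {B : Fin m → Set (ZMod p)} (hB : ∀ j, 0 ∉ B j)
    {a b : Fin m → ZMod p} {i : Fin m} (hab : ∀ j < i, a j = b j) (hne : a i ≠ b i) :
    (lexDiff B).Adj a b ↔ a i - b i ∈ B i ∪ -B i := by
  refine ⟨fun ⟨_, i', hab', hmem⟩ => ?_, fun h => ⟨fun h' => hne (congrFun h' i), i, hab, h⟩⟩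
  have hne' : a i' ≠ b i' := by
    rintro h
    rw [h, sub_self] at hmem
    exact hB i' (by simpa using hmem)
  obtain rfl : i' = i := le_antisymm (not_lt.mp fun h => hne (hab' i h))
    (not_lt.mp fun h => hne' (hab i' h))
  exact hmem

theorem lexDiff_adj_apply_iff {B : Fin m → Set (ZMod p)}
    {σ : (Fin m → ZMod p) → (Fin m → ZMod p)} (hσ : IsSylElem σ) (x y : Fin m → ZMod p) :
    (lexDiff B).Adj (σ x) (σ y) ↔ (lexDiff B).Adj x y :=
  and_congr hσ.injective.ne_iff <| exists_congr fun _ => by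
    rw [hσ.eq_below_iff]
    exact and_congr_right fun h => by rw [hσ.sub_apply_eq h]

theorem isSylFixed_lexDiff (B : Fin m → Set (ZMod p)) : IsSylFixed (lexDiff B) :=
  fun _ hσ => ((lexDiff B).image_edgeSet_eq_iff hσ.bijective).mpr (lexDiff_adj_apply_iff hσ)

theorem IsSylFixed.eq_lexDiff {P : Set (ZMod p)} (hP : IsPlusSet P)
    {A : SimpleGraph (Fin m → ZMod p)} (hA : IsSylFixed A) :
    A = lexDiff fun i => {d ∈ P | A.Adj (Pi.single i d) 0} := by
  ext a b
  by_cases hab : a = b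
  · subst hab
    simp only [SimpleGraph.irrefl]
  obtain ⟨i, hbelow, hne⟩ := Function.exists_eq_below_and_ne hab
  have hd : a i - b i ≠ 0 := sub_ne_zero.mpr hne
  rw [lexDiff_adj_iff_of_eq_below (fun _ h => hP.1 h.1) hbelow hne,
    hA.adj_iff_adj_single hbelow hne]
  simp only [Set.mem_union, Set.mem_neg, Set.mem_sep_iff, hA.adj_single_neg_iff hd]
  rw [← or_and_right, and_iff_right (hP.2 _ hd).1]

end Syl

theorem stmt_16_general (p m : ℕ)
    (P : Set (ZMod p)) (hP : IsPlusSet P) :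
    {A : SimpleGraph (Fin m → ZMod p) |
        ∀ σ : (Fin m → ZMod p) → (Fin m → ZMod p),
          IsSylElem σ → Sym2.map σ '' A.edgeSet = A.edgeSet} =
      {A : SimpleGraph (Fin m → ZMod p) |
        ∃ B : Fin m → Set (ZMod p), (∀ i, B i ⊆ P) ∧ A = lexDiff B} := by
  ext A
  constructor
  · intro hA
    exact ⟨_, fun _ => Set.sep_subset _ _, IsSylFixed.eq_lexDiff hP hA⟩
  · rintro ⟨B, -, rfl⟩
    exact isSylFixed_lexDiff B

theorem stmt_16 (p m : ℕ) (hp : p.Prime) (hm : 0 < m)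
    (P : Set (ZMod p)) (hP : IsPlusSet P) :
    {A : SimpleGraph (Fin m → ZMod p) |
        ∀ σ : (Fin m → ZMod p) → (Fin m → ZMod p),
          IsSylElem σ → Sym2.map σ '' A.edgeSet = A.edgeSet} =
      {A : SimpleGraph (Fin m → ZMod p) |
        ∃ B : Fin m → Set (ZMod p), (∀ i, B i ⊆ P) ∧ A = lexDiff B} :=
  stmt_16_general p m P hP
end

section
/- Let p be a prime, m a positive integer, and A_1, …, A_m ⊆ Z_p^+. Then for every j ∈ {1,…,m}, the graph C^{∅} ∘ ⋯ ∘ C^{∅} ∘ C^{A_1} ∘ ⋯ ∘ C^{A_{m−j}} (with j empty factors in front) is isomorphic to an edge-subgraph (spanning subgraph) of C^{A_1} ∘ ⋯ ∘ C^{A_m}. -/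
open scoped Fin.NatCast

theorem SimpleGraph.Hom.exists_iso_le_of_bijective {V W : Type*} {G : SimpleGraph V}
    {H : SimpleGraph W} (f : G →g H) (hf : Function.Bijective f) :
    ∃ H' ≤ H, Nonempty (G ≃g H') := by
  let e := Equiv.ofBijective f hf
  refine ⟨G.map e, ?_, ⟨SimpleGraph.Iso.map e G⟩⟩
  rw [← e.coe_toEmbedding, SimpleGraph.map_le_iff_le_comap]
  exact fun _ _ h => f.map_adj h

theorem Fin.exists_perm_val_eq_add (m j : ℕ) :
    ∃ σ : Equiv.Perm (Fin m), ∀ k : Fin m, (k : ℕ) + j < m → (σ k : ℕ) = k + j := by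
  cases m with
  | zero => exact ⟨1, fun k => k.elim0⟩
  | succ n =>
    refine ⟨Equiv.addRight (j : Fin (n + 1)), fun k hk => ?_⟩
    rw [Equiv.coe_addRight, Fin.val_add, Fin.val_natCast, Nat.add_mod_mod,
      Nat.mod_eq_of_lt hk]

def prependEmpty {p m : ℕ} (A : Fin m → Set (ZMod p)) (j : ℕ) : Fin m → Set (ZMod p) :=
  fun i => if (i : ℕ) < j then ∅ else A ⟨(i : ℕ) - j, by omega⟩

theorem lexDiff_prependEmpty_adj_comp {p m j : ℕ} {A : Fin m → Set (ZMod p)}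
    {σ : Equiv.Perm (Fin m)} (hσ : ∀ k : Fin m, (k : ℕ) + j < m → (σ k : ℕ) = k + j)
    {x y : Fin m → ZMod p} (hxy : (lexDiff (prependEmpty A j)).Adj x y) :
    (lexDiff A).Adj (x ∘ σ) (y ∘ σ) := by
  obtain ⟨hne, i, hpre, hmem⟩ := hxy
  have hji : ¬ (i : ℕ) < j := fun h => by simp [prependEmpty, h] at hmem
  let i' : Fin m := ⟨(i : ℕ) - j, by omega⟩
  have hσi : σ i' = i := Fin.ext (by rw [hσ i' (by simp [i']; omega)]; simp [i']; omega)
  refine ⟨fun h => hne (funext fun k => by simpa using congrFun h (σ.symm k)), i', ?_, ?_⟩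
  · intro k hk
    have hk' : (k : ℕ) < i - j := hk
    exact hpre (σ k) (Fin.lt_def.2 (by rw [hσ k (by omega)]; omega))
  · simpa [hσi, prependEmpty, hji] using hmem

theorem stmt_17 (p m : ℕ) (A : Fin m → Set (ZMod p)) (j : ℕ) :
    ∃ H' : SimpleGraph (Fin m → ZMod p), H' ≤ lexDiff A ∧
      Nonempty
        ((lexDiff (fun i : Fin m =>
          if h : (i : ℕ) < j then (∅ : Set (ZMod p))
          else A ⟨(i : ℕ) - j, by have := i.isLt; omega⟩)) ≃g H') := by
  obtain ⟨σ, hσ⟩ := Fin.exists_perm_val_eq_add m j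
  let f : lexDiff (prependEmpty A j) →g lexDiff A :=
    ⟨fun x => x ∘ σ, lexDiff_prependEmpty_adj_comp hσ⟩
  exact f.exists_iso_le_of_bijective (Equiv.arrowCongr σ.symm (Equiv.refl _)).bijective
end

section
/- Let p be a prime, m a positive integer, and A_1, …, A_m ⊆ Z_p^+ with at least one A_i nonempty, and let t := wr(A_1,…,A_m) be the empty-prefix, i.e. one less than the smallest index i with A_i ≠ ∅. Then the graph C^{A_1} ∘ ⋯ ∘ C^{A_m} contains the complete bipartite graph K_{p^{m−1−t}, p^{m−1−t}} as a subgraph; that is, there exist disjoint sets U, W of vertices, each of size p^{m−1−t}, such that every vertex of U is adjacent to every vertex of W. -/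
open Finset

section Cylinder

variable {α : Type*} [Fintype α] {m : ℕ}

def cylinder (i : Fin m) (c : Fin m → α) : Finset (Fin m → α) :=
  Fintype.piFinset fun j => if j ≤ i then {c j} else univ

theorem mem_cylinder {i : Fin m} {c x : Fin m → α} :
    x ∈ cylinder i c ↔ ∀ j ≤ i, x j = c j := by
  simp only [cylinder, Fintype.mem_piFinset]
  refine forall_congr' fun j => ?_
  split_ifs with hj <;> simp [hj]

theorem card_cylinder (i : Fin m) (c : Fin m → α) :
    #(cylinder i c) = Fintype.card α ^ (m - 1 - i) := by
  have hfilter : univ.filter (fun j : Fin m => ¬j ≤ i) = Ioi i := by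
    ext j
    simp
  simp only [cylinder, Fintype.card_piFinset, apply_ite Finset.card, card_singleton, card_univ]
  rw [prod_ite, prod_const_one, one_mul, prod_const, hfilter, Fin.card_Ioi]

theorem disjoint_cylinder {i : Fin m} {c d : Fin m → α} (h : c i ≠ d i) :
    Disjoint (cylinder i c) (cylinder i d) := by
  refine disjoint_left.2 fun x hc hd => h ?_
  rw [mem_cylinder] at hc hd
  rw [← hc i le_rfl, ← hd i le_rfl]

end Cylinder

theorem lexDiff_adj_of_mem_cylinder {p m : ℕ} [NeZero p] {A : Fin m → Set (ZMod p)}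
    {i : Fin m} {c d x y : Fin m → ZMod p} (hx : x ∈ cylinder i c) (hy : y ∈ cylinder i d)
    (hprefix : ∀ j < i, c j = d j) (hne : c i ≠ d i) (hdiff : c i - d i ∈ A i ∪ -(A i)) :
    (lexDiff A).Adj x y := by
  rw [mem_cylinder] at hx hy
  refine ⟨fun hxy => hne ?_, i, fun j hj => ?_, ?_⟩
  · rw [← hx i le_rfl, ← hy i le_rfl, hxy]
  · rw [hx j hj.le, hy j hj.le, hprefix j hj]
  · rwa [hx i le_rfl, hy i le_rfl]

theorem stmt_18_general (p m : ℕ) (hp : p.Prime)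
    (P : Set (ZMod p)) (hP : IsPlusSet P)
    (A : Fin m → Set (ZMod p)) (hA : ∀ i, A i ⊆ P)
    -- `i₀` is the smallest (0-based) index with `A i₀ ≠ ∅`,
    -- so the empty-prefix is `t = (i₀ : ℕ)`
    (i₀ : Fin m) (hi₀ : A i₀ ≠ ∅)
    (t : ℕ) (ht : t = (i₀ : ℕ)) :
    ∃ U W : Finset (Fin m → ZMod p), Disjoint U W ∧
      U.card = p ^ (m - 1 - t) ∧ W.card = p ^ (m - 1 - t) ∧
      ∀ u ∈ U, ∀ w ∈ W, (lexDiff A).Adj u w := by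
  have : NeZero p := ⟨hp.ne_zero⟩
  obtain ⟨a, ha⟩ := Set.nonempty_iff_ne_empty.2 hi₀
  have ha0 : a ≠ 0 := fun h => hP.1 (h ▸ hA i₀ ha)
  have hne : (0 : Fin m → ZMod p) i₀ ≠ (Pi.single i₀ a : Fin m → ZMod p) i₀ := by simpa using ha0.symm
  refine ⟨cylinder i₀ 0, cylinder i₀ (Pi.single i₀ a), disjoint_cylinder hne, ?_, ?_, ?_⟩
  · rw [card_cylinder, ZMod.card, ht]
  · rw [card_cylinder, ZMod.card, ht]
  · intro u hu w hw
    refine lexDiff_adj_of_mem_cylinder hu hw (fun j hj => ?_) hne ?_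
    · simp [hj.ne]
    · simpa using Or.inr ha

theorem stmt_18 (p m : ℕ) (hp : p.Prime) (hm : 0 < m)
    (P : Set (ZMod p)) (hP : IsPlusSet P)
    (A : Fin m → Set (ZMod p)) (hA : ∀ i, A i ⊆ P)
    -- `i₀` is the smallest (0-based) index with `A i₀ ≠ ∅`,
    -- so the empty-prefix is `t = (i₀ : ℕ)`
    (i₀ : Fin m) (hi₀ : A i₀ ≠ ∅) (hmin : ∀ j : Fin m, j < i₀ → A j = ∅)
    (t : ℕ) (ht : t = (i₀ : ℕ)) :
    ∃ U W : Finset (Fin m → ZMod p), Disjoint U W ∧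
      U.card = p ^ (m - 1 - t) ∧ W.card = p ^ (m - 1 - t) ∧
      ∀ u ∈ U, ∀ w ∈ W, (lexDiff A).Adj u w :=
  stmt_18_general p m hp P hP A hA i₀ hi₀ t ht
end
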